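/- Let G be a finite simple graph with at least one edge and let r be a positive integer. Then tree-μ(G^{r+2}) ≤ tree-α(G^{r+2}) ≤ tree-μ(G^r) ≤ tree-α(G^r). -/

import Mathlib

open SimpleGraph

namespace Paper

/-- A tree decomposition of a graph `G`. -/
structure TreeDecomp {V : Type} (G : SimpleGraph V) where
  ι : Type
  fin : Fintype ι
  tree : SimpleGraph ι
  isTree : tree.IsTree
  bag : ι → Set V
  mem_bag : ∀ v : V, ∃ t, v ∈ bag t
  edge_bag : ∀ ⦃u w : V⦄, G.Adj u w → ∃ t, u ∈ bag t ∧ w ∈ bag t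
  coherent : ∀ v : V, (tree.induce {t | v ∈ bag t}).Connected

/-- `M` is an induced matching in `G`: a set of edges, pairwise disjoint,
with no edge of `G` joining endpoints of distinct edges of `M`. -/
def IsInducedMatching {V : Type} (G : SimpleGraph V) (M : Finset (V × V)) : Prop :=
  (∀ p ∈ M, G.Adj p.1 p.2) ∧
    ∀ p ∈ M, ∀ q ∈ M, p ≠ q →
      (p.1 ≠ q.1 ∧ p.1 ≠ q.2 ∧ p.2 ≠ q.1 ∧ p.2 ≠ q.2) ∧
      (¬ G.Adj p.1 q.1 ∧ ¬ G.Adj p.1 q.2 ∧ ¬ G.Adj p.2 q.1 ∧ ¬ G.Adj p.2 q.2)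

/-- Every edge of `M` has an endpoint in `X`. -/
def Touches {V : Type} (M : Finset (V × V)) (X : Set V) : Prop :=
  ∀ p ∈ M, p.1 ∈ X ∨ p.2 ∈ X

/-- μ(𝒯): the maximum size of an induced matching of `G` all of whose edges
touch a common bag of the tree decomposition `D`. -/
noncomputable def mu {V : Type} (G : SimpleGraph V) (D : TreeDecomp G) : ℕ :=
  sSup {n | ∃ (t : D.ι) (M : Finset (V × V)),
    IsInducedMatching G M ∧ Touches M (D.bag t) ∧ M.card = n}

/-- Induced matching treewidth: minimum of μ(𝒯) over tree decompositions. -/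
noncomputable def treeMu {V : Type} (G : SimpleGraph V) : ℕ :=
  sInf {n | ∃ D : TreeDecomp G, mu G D = n}

/-- `S` is an independent set of `G`. -/
def IsIndepSet {V : Type} (G : SimpleGraph V) (S : Finset V) : Prop :=
  ∀ u ∈ S, ∀ v ∈ S, u ≠ v → ¬ G.Adj u v

/-- α(𝒯): the maximum size of an independent set of `G` contained in a bag. -/
noncomputable def alphaTD {V : Type} (G : SimpleGraph V) (D : TreeDecomp G) : ℕ :=
  sSup {n | ∃ (t : D.ι) (S : Finset V),
    IsIndepSet G S ∧ ↑S ⊆ D.bag t ∧ S.card = n}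

/-- Tree-independence number: minimum of α(𝒯) over tree decompositions. -/
noncomputable def treeAlpha {V : Type} (G : SimpleGraph V) : ℕ :=
  sInf {n | ∃ D : TreeDecomp G, alphaTD G D = n}

/-- The `k`-th power of `G`: distinct vertices adjacent iff their distance in `G`
is at most `k` (for `k = 0` this is the edgeless graph). -/
def power {V : Type} (G : SimpleGraph V) (k : ℕ) : SimpleGraph V :=
  SimpleGraph.fromRel (fun u v => G.Reachable u v ∧ G.dist u v ≤ k)

/-- The graph `G°[ℋ]` for a family `ℋ = {H j}` of subgraphs of `G`: vertices are
indices `j`, two distinct indices adjacent iff the subgraphs share a vertex or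
there is an edge of `G` between them. -/
def blowup {V J : Type} (G : SimpleGraph V) (H : J → G.Subgraph) : SimpleGraph J :=
  SimpleGraph.fromRel (fun i j =>
    ((H i).verts ∩ (H j).verts).Nonempty ∨
      ∃ u ∈ (H i).verts, ∃ v ∈ (H j).verts, G.Adj u v)




section Star

variable {ι J : Type} {T : SimpleGraph ι} {t₀ : ι}

/-- `T` together with pendant vertices (one per element of `J`) attached to `t₀`. -/
def starSum (T : SimpleGraph ι) (t₀ : ι) (J : Type) : SimpleGraph (ι ⊕ J) :=
  SimpleGraph.fromRel (fun x y => match x, y with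
    | .inl a, .inl b => T.Adj a b
    | .inl a, .inr _ => a = t₀
    | _, _ => False)

lemma starSum_adj_inl_inl {a b : ι} :
    (starSum T t₀ J).Adj (Sum.inl a) (Sum.inl b) ↔ T.Adj a b := by
  rw [starSum, SimpleGraph.fromRel_adj]
  constructor
  · rintro ⟨hne, h | h⟩
    · exact h
    · exact h.symm
  · intro h
    exact ⟨fun e => h.ne (Sum.inl.inj e), Or.inl h⟩

lemma starSum_adj_inl_inr {a : ι} {j : J} :
    (starSum T t₀ J).Adj (Sum.inl a) (Sum.inr j) ↔ a = t₀ := by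
  rw [starSum, SimpleGraph.fromRel_adj]
  constructor
  · rintro ⟨hne, h | h⟩
    · exact h
    · exact h.elim
  · intro h
    exact ⟨by simp, Or.inl h⟩

lemma starSum_adj_inr_inl {a : ι} {j : J} :
    (starSum T t₀ J).Adj (Sum.inr j) (Sum.inl a) ↔ a = t₀ := by
  constructor
  · intro h
    exact starSum_adj_inl_inr.mp h.symm
  · intro h
    exact (starSum_adj_inl_inr.mpr h).symm

lemma starSum_adj_inr_inr {i j : J} :
    ¬ (starSum T t₀ J).Adj (Sum.inr i) (Sum.inr j) := by
  rw [starSum, SimpleGraph.fromRel_adj]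
  rintro ⟨hne, h | h⟩ <;> exact h

lemma starSum_connected (hT : T.Connected) : (starSum T t₀ J).Connected := by
  let hom : T →g starSum T t₀ J :=
    ⟨Sum.inl, fun h => starSum_adj_inl_inl.mpr h⟩
  have key : ∀ x : ι ⊕ J, (starSum T t₀ J).Reachable x (Sum.inl t₀) := by
    rintro (a | j)
    · exact (hT.preconnected a t₀).map hom
    · exact (starSum_adj_inr_inl.mpr rfl).reachable
  haveI : Nonempty (ι ⊕ J) := ⟨Sum.inl t₀⟩
  exact Connected.mk (fun x y => (key x).trans (key y).symm)

/-- Projection of walks in the star-sum down to `T`. -/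
lemma starSum_proj {x y : ι ⊕ J} (p : (starSum T t₀ J).Walk x y) :
    ∀ b, y = Sum.inl b → ∃ q : T.Walk (Sum.elim id (fun _ => t₀) x) b,
      ∀ e ∈ q.edges, Sym2.map Sum.inl e ∈ p.edges := by
  induction p with
  | nil =>
    rintro b rfl
    exact ⟨Walk.nil, by simp⟩
  | @cons x y' y h p' ih =>
    intro b hb
    obtain ⟨q', hq'⟩ := ih b hb
    match x, y' with
    | Sum.inl a, Sum.inl c =>
      refine ⟨Walk.cons (starSum_adj_inl_inl.mp h) q', ?_⟩
      intro e he
      change e ∈ s(a, c) :: q'.edges at he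
      rcases List.mem_cons.mp he with rfl | he
      · rw [Walk.edges_cons]
        exact List.mem_cons.mpr (Or.inl (by simp))
      · rw [Walk.edges_cons]
        exact List.mem_cons.mpr (Or.inr (hq' e he))
    | Sum.inl a, Sum.inr j =>
      have ha : a = t₀ := starSum_adj_inl_inr.mp h
      subst ha
      exact ⟨q', fun e he => by
        rw [Walk.edges_cons]; exact List.mem_cons.mpr (Or.inr (hq' e he))⟩
    | Sum.inr i, Sum.inl c =>
      have hc : c = t₀ := starSum_adj_inr_inl.mp h
      subst hc
      exact ⟨q', fun e he => by
        rw [Walk.edges_cons]; exact List.mem_cons.mpr (Or.inr (hq' e he))⟩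
    | Sum.inr i, Sum.inr j => exact absurd h starSum_adj_inr_inr

lemma starSum_pendant_mem {x y : ι ⊕ J} (p : (starSum T t₀ J).Walk x y) :
    ∀ j, y = Sum.inr j → x ≠ Sum.inr j → s(Sum.inl t₀, (Sum.inr j : ι ⊕ J)) ∈ p.edges := by
  induction p with
  | nil =>
    rintro j rfl hx
    exact absurd rfl hx
  | @cons x y' y h p' ih =>
    intro j hy hx
    by_cases hy' : y' = Sum.inr j
    · subst hy'
      rw [Walk.edges_cons]
      refine List.mem_cons.mpr (Or.inl ?_)
      match x with
      | Sum.inl a =>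
        have : a = t₀ := starSum_adj_inl_inr.mp h
        subst this; rfl
      | Sum.inr i => exact absurd h starSum_adj_inr_inr
    · rw [Walk.edges_cons]
      exact List.mem_cons.mpr (Or.inr (ih j hy hy'))

lemma starSum_isAcyclic (hT : T.IsAcyclic) : (starSum T t₀ J).IsAcyclic := by
  rw [isAcyclic_iff_forall_adj_isBridge]
  rintro (a | i) (c | j) h
  · rw [isBridge_iff_adj_and_forall_walk_mem_edges]
    refine fun p => ?_
    obtain ⟨q, hq⟩ := starSum_proj p c rfl
    have hTb := (isAcyclic_iff_forall_adj_isBridge.mp hT) (starSum_adj_inl_inl.mp h)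
    rw [isBridge_iff_adj_and_forall_walk_mem_edges] at hTb
    have := hq s(a, c) (hTb q)
    simpa using this
  · have ha : a = t₀ := starSum_adj_inl_inr.mp h
    subst ha
    rw [isBridge_iff_adj_and_forall_walk_mem_edges]
    exact fun p => starSum_pendant_mem p j rfl (by simp)
  · have hc : c = t₀ := starSum_adj_inr_inl.mp h
    subst hc
    rw [Sym2.eq_swap, isBridge_iff_adj_and_forall_walk_mem_edges]
    exact fun p => starSum_pendant_mem p i rfl (by simp)
  · exact absurd h starSum_adj_inr_inr

lemma starSum_isTree (hT : T.IsTree) : (starSum T t₀ J).IsTree :=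
  ⟨starSum_connected hT.isConnected, starSum_isAcyclic hT.IsAcyclic⟩

/-- Transfer induced-subgraph connectivity through `Sum.inl`. -/
lemma starSum_induce_connected {S : Set ι} (hS : (T.induce S).Connected) :
    ((starSum T t₀ J).induce (Sum.inl '' S)).Connected := by
  let hom : T.induce S →g (starSum T t₀ J).induce (Sum.inl '' S) :=
    ⟨fun t => ⟨Sum.inl t.1, ⟨t.1, t.2, rfl⟩⟩, by
      rintro ⟨a, ha⟩ ⟨b, hb⟩ hab
      show (starSum T t₀ J).Adj (Sum.inl a) (Sum.inl b)
      exact starSum_adj_inl_inl.mpr hab⟩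
  obtain ⟨⟨t, ht⟩⟩ := hS.nonempty
  haveI : Nonempty ↑(Sum.inl '' S : Set (ι ⊕ J)) := ⟨⟨Sum.inl t, ⟨t, ht, rfl⟩⟩⟩
  refine Connected.mk ?_
  rintro ⟨x, hx⟩ ⟨y, hy⟩
  obtain ⟨a, ha, rfl⟩ := hx
  obtain ⟨c, hc, rfl⟩ := hy
  exact (hS.preconnected ⟨a, ha⟩ ⟨c, hc⟩).map hom

/-- Monotonicity of reachability in induced subgraphs. -/
lemma reachable_induce_mono {W : Type} {G : SimpleGraph W} {A B : Set W} (hAB : A ⊆ B)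
    {x y : W} (hx : x ∈ A) (hy : y ∈ A)
    (h : (G.induce A).Reachable ⟨x, hx⟩ ⟨y, hy⟩) :
    (G.induce B).Reachable ⟨x, hAB hx⟩ ⟨y, hAB hy⟩ := by
  let hom : G.induce A →g G.induce B :=
    ⟨fun a => ⟨a.1, hAB a.2⟩, by rintro ⟨a, ha⟩ ⟨b, hb⟩ hab; exact hab⟩
  exact h.map hom

end Star


section Generic

variable {V : Type}

lemma power_adj {G : SimpleGraph V} {k : ℕ} {u v : V} :
    (power G k).Adj u v ↔ u ≠ v ∧ G.Reachable u v ∧ G.dist u v ≤ k := by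
  rw [power, SimpleGraph.fromRel_adj]
  constructor
  · rintro ⟨hne, h | h⟩
    · exact ⟨hne, h⟩
    · exact ⟨hne, h.1.symm, by rw [SimpleGraph.dist_comm]; exact h.2⟩
  · rintro ⟨hne, h⟩
    exact ⟨hne, Or.inl h⟩

/-- The trivial one-bag tree decomposition. -/
noncomputable def trivDecomp (G : SimpleGraph V) : TreeDecomp G where
  ι := Unit
  fin := inferInstance
  tree := ⊥
  isTree := by
    constructor
    · haveI : Nonempty Unit := ⟨()⟩
      exact Connected.mk (fun u v => by cases u; cases v; exact Reachable.refl _)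
    · exact isAcyclic_bot
  bag _ := Set.univ
  mem_bag v := ⟨(), trivial⟩
  edge_bag u w _ := ⟨(), trivial, trivial⟩
  coherent v := by
    haveI : Nonempty {t : Unit | v ∈ Set.univ} := ⟨⟨(), trivial⟩⟩
    refine Connected.mk (fun a b => ?_)
    have : a = b := Subtype.ext (Subsingleton.elim _ _)
    rw [this]

variable [Fintype V]

lemma muSet_nonempty (G : SimpleGraph V) (D : TreeDecomp G) :
    {n | ∃ (t : D.ι) (M : Finset (V × V)),
      IsInducedMatching G M ∧ Touches M (D.bag t) ∧ M.card = n}.Nonempty := by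
  obtain ⟨t⟩ := D.isTree.isConnected.nonempty
  exact ⟨0, t, ∅, ⟨fun p hp => absurd hp (Finset.notMem_empty p),
    fun p hp => absurd hp (Finset.notMem_empty p)⟩,
    fun p hp => absurd hp (Finset.notMem_empty p), rfl⟩

lemma muSet_bddAbove (G : SimpleGraph V) (D : TreeDecomp G) :
    BddAbove {n | ∃ (t : D.ι) (M : Finset (V × V)),
      IsInducedMatching G M ∧ Touches M (D.bag t) ∧ M.card = n} := by
  refine ⟨Fintype.card (V × V), ?_⟩
  rintro n ⟨t, M, _, _, rfl⟩
  exact M.card_le_univ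

lemma alphaSet_bddAbove (G : SimpleGraph V) (D : TreeDecomp G) :
    BddAbove {n | ∃ (t : D.ι) (S : Finset V),
      IsIndepSet G S ∧ ↑S ⊆ D.bag t ∧ S.card = n} := by
  refine ⟨Fintype.card V, ?_⟩
  rintro n ⟨t, S, _, _, rfl⟩
  exact S.card_le_univ

lemma mu_le_alphaTD (G : SimpleGraph V) (D : TreeDecomp G) : mu G D ≤ alphaTD G D := by
  classical
  rw [mu, alphaTD]
  refine csSup_le (muSet_nonempty G D) ?_
  rintro n ⟨t, M, hM, hT, rfl⟩
  refine le_csSup (alphaSet_bddAbove G D) ?_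
  set f : V × V → V := fun p => if p.1 ∈ D.bag t then p.1 else p.2 with hf
  have hfmem : ∀ p, f p = p.1 ∨ f p = p.2 := by
    intro p
    by_cases h : p.1 ∈ D.bag t
    · exact Or.inl (if_pos h)
    · exact Or.inr (if_neg h)
  have hne : ∀ p ∈ M, ∀ q ∈ M, p ≠ q → f p ≠ f q := by
    intro p hp q hq hpq
    obtain ⟨⟨h1, h2, h3, h4⟩, _⟩ := hM.2 p hp q hq hpq
    rcases hfmem p with hp' | hp' <;> rcases hfmem q with hq' | hq' <;>
      rw [hp', hq'] <;> assumption
  have hinj : Set.InjOn f M := by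
    intro p hp q hq h
    by_contra hpq
    exact hne p hp q hq hpq h
  refine ⟨t, M.image f, ?_, ?_, ?_⟩
  · intro u hu v hv huv
    obtain ⟨p, hp, rfl⟩ := Finset.mem_image.mp hu
    obtain ⟨q, hq, rfl⟩ := Finset.mem_image.mp hv
    have hpq : p ≠ q := fun h => huv (by rw [h])
    obtain ⟨_, ⟨a1, a2, a3, a4⟩⟩ := hM.2 p hp q hq hpq
    rcases hfmem p with hp' | hp' <;> rcases hfmem q with hq' | hq' <;>
      rw [hp', hq'] <;> assumption
  · intro u hu
    obtain ⟨p, hp, rfl⟩ := Finset.mem_image.mp (Finset.mem_coe.mp hu)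
    by_cases hb : p.1 ∈ D.bag t
    · rw [hf]; simp only [if_pos hb]; exact hb
    · rw [hf]; simp only [if_neg hb]
      rcases hT p hp with h | h
      · exact absurd h hb
      · exact h
  · exact Finset.card_image_of_injOn hinj

lemma treeMu_le_treeAlpha (G : SimpleGraph V) : treeMu G ≤ treeAlpha G := by
  have hne : {n | ∃ D : TreeDecomp G, alphaTD G D = n}.Nonempty := ⟨_, trivDecomp G, rfl⟩
  obtain ⟨D, hD⟩ := Nat.sInf_mem hne
  calc treeMu G ≤ mu G D := Nat.sInf_le ⟨D, rfl⟩
    _ ≤ alphaTD G D := mu_le_alphaTD G D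
    _ = treeAlpha G := hD

end Generic

section Lift

variable {V : Type}

lemma adj_power {G : SimpleGraph V} {r : ℕ} (hr : 0 < r) {u v : V} (h : G.Adj u v) :
    (power G r).Adj u v :=
  power_adj.mpr ⟨h.ne, h.reachable,
    by rw [SimpleGraph.dist_eq_one_iff_adj.mpr h]; omega⟩

lemma dist_step {G : SimpleGraph V} {u w : V} {d : ℕ} (h : G.Reachable u w)
    (hd : G.dist u w = d + 1) :
    ∃ u', G.Adj u u' ∧ G.Reachable u' w ∧ G.dist u' w = d := by
  obtain ⟨p, hp⟩ := h.exists_walk_length_eq_dist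
  cases p with
  | nil => rw [hd] at hp; simp at hp
  | @cons _ u' _ h' q =>
    refine ⟨u', h', ⟨q⟩, ?_⟩
    rw [Walk.length_cons, hd] at hp
    have h1 : G.dist u' w ≤ d := by
      have := SimpleGraph.dist_le q
      omega
    obtain ⟨q2, hq2⟩ :=
      SimpleGraph.Reachable.exists_walk_length_eq_dist (⟨q⟩ : G.Reachable u' w)
    have h2 := SimpleGraph.dist_le (Walk.cons h' q2)
    rw [Walk.length_cons, hq2, hd] at h2
    omega

lemma exists_adj_of_reachable_ne {G : SimpleGraph V} {u w : V}
    (h : G.Reachable u w) (hne : u ≠ w) : ∃ z, G.Adj u z := by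
  obtain ⟨p⟩ := h
  cases p with
  | nil => exact absurd rfl hne
  | cons h' _ => exact ⟨_, h'⟩

/-- The bags of the lifted decomposition. -/
def liftBag {r : ℕ} (G : SimpleGraph V) (D : TreeDecomp (power G r)) : D.ι ⊕ V → Set V :=
  fun x => match x with
  | Sum.inl t => {v | (∃ z, G.Adj v z) ∧ (v ∈ D.bag t ∨ ∃ w ∈ D.bag t, G.Adj v w)}
  | Sum.inr u => {w | w = u ∧ ¬ ∃ z, G.Adj u z}

variable [Fintype V]

/-- Lift a tree decomposition of `G^r` to one of `G^(r+2)`. -/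
noncomputable def liftDecomp (G : SimpleGraph V) (r : ℕ) (hr : 0 < r)
    (D : TreeDecomp (power G r)) : TreeDecomp (power G (r + 2)) :=
  letI := D.fin
  let t₀ : D.ι := Classical.choice D.isTree.isConnected.nonempty
  { ι := D.ι ⊕ V
    fin := inferInstance
    tree := starSum D.tree t₀ V
    isTree := starSum_isTree D.isTree
    bag := liftBag G D
    mem_bag := by
      intro v
      by_cases hv : ∃ z, G.Adj v z
      · obtain ⟨t, ht⟩ := D.mem_bag v
        exact ⟨Sum.inl t, hv, Or.inl ht⟩
      · exact ⟨Sum.inr v, rfl, hv⟩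
    edge_bag := by
      intro u w h
      rw [power_adj] at h
      obtain ⟨hne, hreach, hdist⟩ := h
      have hu : ∃ z, G.Adj u z := exists_adj_of_reachable_ne hreach hne
      have hw : ∃ z, G.Adj w z := exists_adj_of_reachable_ne hreach.symm (Ne.symm hne)
      have hd0 : G.dist u w ≠ 0 := by
        rw [SimpleGraph.dist_ne_zero_iff_ne_and_reachable]
        exact ⟨hne, hreach⟩
      rcases (by omega : G.dist u w ≤ r ∨ G.dist u w = r + 1 ∨ G.dist u w = r + 2)
        with hc | hc | hc
      · obtain ⟨t, h1, h2⟩ := D.edge_bag (power_adj.mpr ⟨hne, hreach, hc⟩)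
        exact ⟨Sum.inl t, ⟨hu, Or.inl h1⟩, ⟨hw, Or.inl h2⟩⟩
      · obtain ⟨u', hadj, hre, hd'⟩ := dist_step hreach hc
        have hne' : u' ≠ w := by
          intro e; subst e; rw [SimpleGraph.dist_self] at hd'; omega
        obtain ⟨t, h1, h2⟩ := D.edge_bag (power_adj.mpr ⟨hne', hre, by omega⟩)
        exact ⟨Sum.inl t, ⟨hu, Or.inr ⟨u', h1, hadj⟩⟩, ⟨hw, Or.inl h2⟩⟩
      · obtain ⟨u', hadj, hre, hd'⟩ :=
          dist_step hreach (show G.dist u w = (r + 1) + 1 by omega)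
        have hre2 : G.Reachable w u' := hre.symm
        have hd2 : G.dist w u' = r + 1 := by rw [SimpleGraph.dist_comm]; exact hd'
        obtain ⟨w', hadjw, hrew, hdw⟩ := dist_step hre2 hd2
        have hne' : w' ≠ u' := by
          intro e; subst e; rw [SimpleGraph.dist_self] at hdw; omega
        obtain ⟨t, h1, h2⟩ := D.edge_bag (power_adj.mpr ⟨hne', hrew, le_of_eq hdw⟩)
        exact ⟨Sum.inl t, ⟨hu, Or.inr ⟨u', h2, hadj⟩⟩, ⟨hw, Or.inr ⟨w', h1, hadjw⟩⟩⟩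
    coherent := by
      intro v
      by_cases hv : ∃ z, G.Adj v z
      · have hset : {x | v ∈ liftBag G D x} =
            Sum.inl '' {t | v ∈ D.bag t ∨ ∃ w ∈ D.bag t, G.Adj v w} := by
          ext x
          cases x with
          | inl t =>
            constructor
            · rintro ⟨_, h⟩; exact ⟨t, h, rfl⟩
            · rintro ⟨t', ht', he⟩
              cases Sum.inl.inj he
              exact ⟨hv, ht'⟩
          | inr u =>
            constructor
            · rintro ⟨rfl, hiso⟩; exact absurd hv hiso
            · rintro ⟨t', _, he⟩; exact absurd he (by simp)
        rw [hset]
        apply starSum_induce_connected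
        obtain ⟨tv, htv⟩ := D.mem_bag v
        have base : ∀ t (ht : t ∈ {t | v ∈ D.bag t ∨ ∃ w ∈ D.bag t, G.Adj v w}),
            (D.tree.induce {t | v ∈ D.bag t ∨ ∃ w ∈ D.bag t, G.Adj v w}).Reachable
              ⟨t, ht⟩ ⟨tv, Or.inl htv⟩ := by
          intro t ht
          rcases ht with hb | ⟨w, hw, hadj⟩
          · have h1 := (D.coherent v).preconnected ⟨t, hb⟩ ⟨tv, htv⟩
            exact reachable_induce_mono (A := {s | v ∈ D.bag s})
              (B := {t | v ∈ D.bag t ∨ ∃ w ∈ D.bag t, G.Adj v w})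
              (fun s hs => Or.inl hs) hb htv h1
          · obtain ⟨ts, hvs, hws⟩ := D.edge_bag (adj_power hr hadj)
            have h1 := (D.coherent w).preconnected ⟨t, hw⟩ ⟨ts, hws⟩
            have h2 := (D.coherent v).preconnected ⟨ts, hvs⟩ ⟨tv, htv⟩
            have sub1 : {s | w ∈ D.bag s} ⊆ {t | v ∈ D.bag t ∨ ∃ w ∈ D.bag t, G.Adj v w} :=
              fun s hs => Or.inr ⟨w, hs, hadj⟩
            have sub2 : {s | v ∈ D.bag s} ⊆ {t | v ∈ D.bag t ∨ ∃ w ∈ D.bag t, G.Adj v w} :=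
              fun s hs => Or.inl hs
            exact (reachable_induce_mono (A := {s | w ∈ D.bag s}) sub1 hw hws h1).trans
              (reachable_induce_mono (A := {s | v ∈ D.bag s}) sub2 hvs htv h2)
        haveI : Nonempty ↑{t | v ∈ D.bag t ∨ ∃ w ∈ D.bag t, G.Adj v w} :=
          ⟨⟨tv, Or.inl htv⟩⟩
        refine Connected.mk ?_
        rintro ⟨t1, h1⟩ ⟨t2, h2⟩
        exact (base t1 h1).trans (base t2 h2).symm
      · have hset : {x | v ∈ liftBag G D x} = {Sum.inr v} := by
          ext x
          cases x with
          | inl t =>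
            constructor
            · rintro ⟨hz, _⟩; exact absurd hz hv
            · intro he; exact absurd he (by simp)
          | inr u =>
            constructor
            · rintro ⟨rfl, _⟩; rfl
            · intro he
              have : u = v := Sum.inr.inj (Set.mem_singleton_iff.mp he)
              subst this
              exact ⟨rfl, hv⟩
        rw [hset]
        haveI : Nonempty ↑({Sum.inr v} : Set (D.ι ⊕ V)) := ⟨⟨Sum.inr v, rfl⟩⟩
        refine Connected.mk ?_
        rintro ⟨x, hx⟩ ⟨y, hy⟩
        have hxy : (⟨x, hx⟩ : ↑({Sum.inr v} : Set (D.ι ⊕ V))) = ⟨y, hy⟩ :=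
          Subtype.ext ((Set.mem_singleton_iff.mp hx).trans
            (Set.mem_singleton_iff.mp hy).symm)
        rw [hxy] }

lemma alphaTD_liftDecomp_le (G : SimpleGraph V) (r : ℕ) (hr : 0 < r)
    (hE : ∃ u v : V, G.Adj u v) (D : TreeDecomp (power G r)) :
    alphaTD (power G (r + 2)) (liftDecomp G r hr D) ≤ mu (power G r) D := by
  classical
  rw [alphaTD]
  have hmu1 : 1 ≤ mu (power G r) D := by
    obtain ⟨u, v, huv⟩ := hE
    obtain ⟨t, h1, h2⟩ := D.edge_bag (adj_power hr huv)
    refine le_csSup (muSet_bddAbove _ D) ⟨t, {(u, v)}, ⟨?_, ?_⟩, ?_, rfl⟩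
    · intro p hp
      rw [Finset.mem_singleton] at hp
      subst hp
      exact adj_power hr huv
    · intro p hp q hq hpq
      rw [Finset.mem_singleton] at hp hq
      exact absurd (hp.trans hq.symm) hpq
    · intro p hp
      rw [Finset.mem_singleton] at hp
      subst hp
      exact Or.inl h1
  refine csSup_le ?_ ?_
  · obtain ⟨u, v, huv⟩ := hE
    exact ⟨0, Sum.inr u, ∅, fun a ha => absurd ha (Finset.notMem_empty a), by simp, rfl⟩
  rintro n ⟨x, S, hind, hsub, rfl⟩
  cases x with
  | inr u =>
    have hcard : S.card ≤ 1 := Finset.card_le_one.mpr (by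
      intro a ha b hb
      have ha' := hsub (Finset.mem_coe.mpr ha)
      have hb' := hsub (Finset.mem_coe.mpr hb)
      exact ha'.1.trans hb'.1.symm)
    exact hcard.trans hmu1
  | inl t =>
    refine le_csSup (muSet_bddAbove _ D) ?_
    have hex : ∀ v ∈ S, ∃ z, G.Adj v z ∧ (v ∈ D.bag t ∨ z ∈ D.bag t) := by
      intro v hvS
      obtain ⟨⟨z0, hz0⟩, hor⟩ := hsub (Finset.mem_coe.mpr hvS)
      rcases hor with hb | ⟨w, hw, hadj⟩
      · exact ⟨z0, hz0, Or.inl hb⟩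
      · exact ⟨w, hadj, Or.inr hw⟩
    choose! f hf1 hf2 using hex
    have hfspec : ∀ v ∈ S, G.Adj v (f v) ∧ (v ∈ D.bag t ∨ f v ∈ D.bag t) :=
      fun v hvS => ⟨hf1 v hvS, hf2 v hvS⟩
    have hkey : ∀ v ∈ S, ∀ w ∈ S, v ≠ w →
        ∀ x y, (x = v ∨ G.Adj v x) → (y = w ∨ G.Adj w y) →
          x ≠ y ∧ ¬ (power G r).Adj x y := by
      intro v hvS w hwS hvw x y hx hy
      have hnadj := hind v hvS w hwS hvw
      rw [power_adj] at hnadj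
      push_neg at hnadj
      have hnr : ∀ _ : G.Reachable v w, r + 2 < G.dist v w := fun h1 =>
        by have := hnadj hvw h1; omega
      obtain ⟨pv, hpv⟩ : ∃ p : G.Walk v x, p.length ≤ 1 := by
        rcases hx with rfl | h
        · exact ⟨Walk.nil, by simp⟩
        · exact ⟨Walk.cons h Walk.nil, by simp⟩
      obtain ⟨pw, hpw⟩ : ∃ p : G.Walk w y, p.length ≤ 1 := by
        rcases hy with rfl | h
        · exact ⟨Walk.nil, by simp⟩
        · exact ⟨Walk.cons h Walk.nil, by simp⟩
      constructor
      · rintro rfl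
        have hrvw : G.Reachable v w := ⟨pv.append pw.reverse⟩
        have hd := SimpleGraph.dist_le (pv.append pw.reverse)
        rw [Walk.length_append, Walk.length_reverse] at hd
        have := hnr hrvw
        omega
      · intro hadj
        rw [power_adj] at hadj
        obtain ⟨hxy, hrxy, hdxy⟩ := hadj
        obtain ⟨q, hq⟩ := hrxy.exists_walk_length_eq_dist
        have hrvw : G.Reachable v w := ⟨(pv.append q).append pw.reverse⟩
        have hd := SimpleGraph.dist_le ((pv.append q).append pw.reverse)
        rw [Walk.length_append, Walk.length_append, Walk.length_reverse, hq] at hd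
        have := hnr hrvw
        omega
    refine ⟨t, S.image (fun v => (v, f v)), ⟨?_, ?_⟩, ?_, ?_⟩
    · intro p hp
      obtain ⟨v, hvS, rfl⟩ := Finset.mem_image.mp hp
      exact adj_power hr (hfspec v hvS).1
    · intro p hp q hq hpq
      obtain ⟨v, hvS, rfl⟩ := Finset.mem_image.mp hp
      obtain ⟨w, hwS, rfl⟩ := Finset.mem_image.mp hq
      have hvw : v ≠ w := fun h => hpq (by rw [h])
      have K := hkey v hvS w hwS hvw
      have h11 := K v w (Or.inl rfl) (Or.inl rfl)
      have h12 := K v (f w) (Or.inl rfl) (Or.inr (hfspec w hwS).1)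
      have h21 := K (f v) w (Or.inr (hfspec v hvS).1) (Or.inl rfl)
      have h22 := K (f v) (f w) (Or.inr (hfspec v hvS).1) (Or.inr (hfspec w hwS).1)
      exact ⟨⟨h11.1, h12.1, h21.1, h22.1⟩, ⟨h11.2, h12.2, h21.2, h22.2⟩⟩
    · intro p hp
      obtain ⟨v, hvS, rfl⟩ := Finset.mem_image.mp hp
      exact (hfspec v hvS).2
    · rw [Finset.card_image_of_injective S (fun a b h => congrArg Prod.fst h)]

lemma treeAlpha_power_le (G : SimpleGraph V) (hE : ∃ u v : V, G.Adj u v)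
    (r : ℕ) (hr : 0 < r) :
    treeAlpha (power G (r + 2)) ≤ treeMu (power G r) := by
  have hne : {n | ∃ D : TreeDecomp (power G r), mu (power G r) D = n}.Nonempty :=
    ⟨_, trivDecomp _, rfl⟩
  obtain ⟨D, hD⟩ := Nat.sInf_mem hne
  calc treeAlpha (power G (r + 2))
      ≤ alphaTD (power G (r + 2)) (liftDecomp G r hr D) := Nat.sInf_le ⟨_, rfl⟩
    _ ≤ mu (power G r) D := alphaTD_liftDecomp_le G r hr hE D
    _ = treeMu (power G r) := hD

end Lift

/-- for `G` with at least one edge and `r ≥ 1`,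
tree-μ(G^{r+2}) ≤ tree-α(G^{r+2}) ≤ tree-μ(G^r) ≤ tree-α(G^r). -/
theorem stmt3 {V : Type} [Fintype V] (G : SimpleGraph V)
    (hE : ∃ u v : V, G.Adj u v) (r : ℕ) (hr : 0 < r) :
    treeMu (power G (r + 2)) ≤ treeAlpha (power G (r + 2)) ∧
    treeAlpha (power G (r + 2)) ≤ treeMu (power G r) ∧
    treeMu (power G r) ≤ treeAlpha (power G r) := by
  exact ⟨treeMu_le_treeAlpha _, treeAlpha_power_le G hE r hr, treeMu_le_treeAlpha _⟩

end Paper
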